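/- arXiv:2307.05021 — 2 statements merged into one kernel-verified Lean document; each statement's English description precedes it below -/
import Mathlib

section
/- With notation from the counterexample construction (X ⊆ (ω+1)² with the refined topology, f : X → S_ω defined by f(⟨m, ω⟩) = 0 and f(⟨m, k⟩) = ⟨ξ(k), f_{ξ(k)}(k)⟩ for k ∈ ℕ), the map f is sequence-covering: for every nontrivial sequence p converging to 0 in S_ω, letting n = max of the first coordinates of p's terms, the lift x_k chosen in the fiber with first coordinate n converges to ⟨n, ω⟩ in X and covers p. -/
/-!
A sequence `p` converging to `0` in `S_ω` eventually lies above every graph `L g`. This bounds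
its first coordinates by some `n` (otherwise a `g` exceeding `p` at one visit to each column
is violated at arbitrarily late indices) and sends its second coordinates to infinity.
The lift `⟨n, f_i⁻¹(b)⟩` of `⟨i, b⟩` lies in `X` because `i ≤ n` and the `A_i` are disjoint, and
since `f_i⁻¹(b) ≥ b` the lifts go up the column `n`, hence converge to `⟨n, ω⟩` both in the
product topology and for the extra neighbourhoods `((ω+1) × {ω}) ∪ L g`.
-/

open Filter Topology

/-- `L g` inside `(ω+1)²` (realized as `ℕ∞ × ℕ∞`): the points `⟨n,k⟩` with `n,k` finite
and `k ≥ g n`. -/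
def Lhat (g : ℕ → ℕ) : Set (ℕ∞ × ℕ∞) :=
  {x | ∃ n k : ℕ, x = ((n : ℕ∞), (k : ℕ∞)) ∧ g n ≤ k}

/-- The refined topology on `(ω+1)²`: generated by the product topology together with
the sets `((ω+1) × {ω}) ∪ L g`. -/
def refinedTop : TopologicalSpace (ℕ∞ × ℕ∞) :=
  TopologicalSpace.generateFrom
    ({s | IsOpen s} ∪
     {s | ∃ g : ℕ → ℕ, s = (Set.univ ×ˢ ({(⊤ : ℕ∞)} : Set ℕ∞)) ∪ Lhat g})

/-- The removed set `⋃ i (i × A i)`. -/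
def badSet (A : ℕ → Set ℕ) : Set (ℕ∞ × ℕ∞) :=
  {x | ∃ i m k : ℕ, m < i ∧ k ∈ A i ∧ x = ((m : ℕ∞), (k : ℕ∞))}

/-- The underlying set of the counterexample space `X = (ω+1)² \ ⋃ i (i × A i)`. -/
def Xc (A : ℕ → Set ℕ) : Type := {x : ℕ∞ × ℕ∞ // x ∉ badSet A}

/-- The subspace topology on `X` induced by the refined topology. -/
def XcTop (A : ℕ → Set ℕ) : TopologicalSpace (Xc A) :=
  refinedTop.induced Subtype.val

/-- The sequential fan `S_ω` as `{0} ∪ (ℕ × ℕ)` (with `none` playing the role of `0`),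
where `L g = {⟨n,k⟩ : k ≥ g n}`. -/
def fanTopology : TopologicalSpace (Option (ℕ × ℕ)) :=
  TopologicalSpace.generateFrom
    ({s | ∃ a : ℕ × ℕ, s = {some a}} ∪
     {s | ∃ g : ℕ → ℕ, s = insert none (Option.some '' {x : ℕ × ℕ | g x.1 ≤ x.2})})

theorem eventually_le_of_tendsto_fan {p : ℕ → ℕ × ℕ}
    (hp : @Tendsto ℕ (Option (ℕ × ℕ)) (fun j => some (p j)) atTop
      (@nhds _ fanTopology none))
    (g : ℕ → ℕ) : ∀ᶠ j in atTop, g (p j).1 ≤ (p j).2 := by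
  have hmem := TopologicalSpace.tendsto_nhds_generateFrom_iff.mp hp
    (insert none (Option.some '' {x : ℕ × ℕ | g x.1 ≤ x.2})) (Or.inr ⟨g, rfl⟩)
    (Set.mem_insert _ _)
  filter_upwards [hmem] with j hj
  simpa using hj

theorem exists_forall_fst_le_of_eventually_le {p : ℕ → ℕ × ℕ}
    (h : ∀ g : ℕ → ℕ, ∀ᶠ j in atTop, g (p j).1 ≤ (p j).2) : ∃ n, ∀ j, (p j).1 ≤ n := by
  by_contra! hunbdd
  -- `visit m` is an index at which `p` visits the column `m`, if it does at all
  let visit : ℕ → ℕ := Function.invFun fun j => (p j).1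
  obtain ⟨N, hN⟩ := eventually_atTop.1 (h fun m => (p (visit m)).2 + 1)
  obtain ⟨j, hj⟩ := hunbdd ((Finset.range N).sup fun i => (p i).1)
  have hvisit : (p (visit (p j).1)).1 = (p j).1 :=
    Function.invFun_eq (f := fun j => (p j).1) ⟨j, rfl⟩
  have hlate : N ≤ visit (p j).1 := by
    by_contra! hlt
    have := Finset.le_sup (f := fun i => (p i).1) (Finset.mem_range.2 hlt)
    simp only [hvisit] at this
    omega
  have := hN _ hlate
  rw [hvisit] at this
  omega

theorem tendsto_snd_atTop_of_eventually_le {p : ℕ → ℕ × ℕ}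
    (h : ∀ g : ℕ → ℕ, ∀ᶠ j in atTop, g (p j).1 ≤ (p j).2) :
    Tendsto (fun j => (p j).2) atTop atTop :=
  tendsto_atTop.2 fun M => h fun _ => M

theorem le_coe_symm_apply {s : Set ℕ} (e : s ≃o ℕ) (m : ℕ) : m ≤ (e.symm m : ℕ) :=
  StrictMono.le_apply (f := fun m => (e.symm m : ℕ)) fun _ _ hab => e.symm.strictMono hab

section CounterexampleSpace

variable {A : ℕ → Set ℕ}

theorem natCast_prod_top_notMem_badSet (n : ℕ) : ((n : ℕ∞), (⊤ : ℕ∞)) ∉ badSet A := by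
  rintro ⟨i, m, k, -, -, heq⟩
  exact ENat.top_ne_natCast k (Prod.ext_iff.mp heq).2

theorem natCast_prod_natCast_notMem_badSet (hDisj : Pairwise fun i j => Disjoint (A i) (A j))
    {i n k : ℕ} (hk : k ∈ A i) (hin : i ≤ n) : ((n : ℕ∞), (k : ℕ∞)) ∉ badSet A := by
  rintro ⟨i', m, k', hmi', hk', heq⟩
  simp only [Prod.mk.injEq, Nat.cast_inj] at heq
  obtain ⟨rfl, rfl⟩ := heq
  exact Set.disjoint_left.mp (hDisj (by omega : i ≠ i')) hk hk'

theorem tendsto_refinedTop_natCast_top {k : ℕ → ℕ} (hk : Tendsto k atTop atTop) (n : ℕ) :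
    @Tendsto ℕ (ℕ∞ × ℕ∞) (fun j => ((n : ℕ∞), (k j : ℕ∞))) atTop
      (@nhds _ refinedTop ((n : ℕ∞), ⊤)) := by
  rw [refinedTop, TopologicalSpace.tendsto_nhds_generateFrom_iff]
  rintro s (hs | ⟨g, rfl⟩) hxs
  · have hk' : Tendsto (fun j => (k j : ℕ∞)) atTop (𝓝 ⊤) :=
      ENat.tendsto_nhds_top_iff_natCast_lt.2 fun m =>
        (tendsto_atTop.1 hk (m + 1)).mono fun j hj => by exact_mod_cast hj
    exact (tendsto_const_nhds.prodMk_nhds hk') (IsOpen.mem_nhds hs hxs)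
  · filter_upwards [tendsto_atTop.1 hk (g n)] with j hj
    exact Or.inr ⟨n, k j, rfl, hj⟩

theorem tendsto_XcTop_iff {q : ℕ → Xc A} {x : Xc A} :
    @Tendsto ℕ (Xc A) q atTop (@nhds _ (XcTop A) x) ↔
      @Tendsto ℕ (ℕ∞ × ℕ∞) (fun j => (q j).1) atTop (@nhds _ refinedTop x.1) := by
  rw [XcTop, @nhds_induced _ _ refinedTop, tendsto_comap_iff]
  rfl

theorem index_eq_of_mem (hDisj : Pairwise fun i j => Disjoint (A i) (A j))
    {ξ : ℕ → ℕ} (hξ : ∀ k, k ∈ A (ξ k)) {i k : ℕ} (hk : k ∈ A i) : ξ k = i := by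
  by_contra hne
  exact Set.disjoint_left.mp (hDisj hne) (hξ k) hk

theorem index_enum_symm_apply (hDisj : Pairwise fun i j => Disjoint (A i) (A j))
    (f : ∀ i, (A i) ≃o ℕ) {ξ : ℕ → ℕ} (hξ : ∀ k, k ∈ A (ξ k)) (i m : ℕ) :
    (ξ ((f i).symm m), f (ξ ((f i).symm m)) ⟨(f i).symm m, hξ _⟩) = (i, m) := by
  have hindex := index_eq_of_mem hDisj hξ ((f i).symm m).2
  have hval : ∀ i' (h : ((f i).symm m : ℕ) ∈ A i'), i' = i → f i' ⟨(f i).symm m, h⟩ = m := by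
    rintro _ _ rfl
    simp
  rw [hval _ _ hindex, hindex]

end CounterexampleSpace

theorem f_sequence_covering_general (A : ℕ → Set ℕ)
    (hDisj : Pairwise fun i j => Disjoint (A i) (A j))
    (f : ∀ i, (A i) ≃o ℕ)
    (ξ : ℕ → ℕ) (hξ : ∀ k, k ∈ A (ξ k))
    (F : Xc A → Option (ℕ × ℕ))
    (hFnat : ∀ (x : Xc A) (k : ℕ), x.1.2 = (k : ℕ∞) →
      F x = some (ξ k, (f (ξ k)) ⟨k, hξ k⟩))
    (p : ℕ → ℕ × ℕ)
    (hp : @Tendsto ℕ (Option (ℕ × ℕ)) (fun j => some (p j)) atTop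
      (@nhds _ fanTopology none)) :
    ∃ n : ℕ, (∀ j, (p j).1 ≤ n) ∧
      ∃ (q : ℕ → Xc A) (x : Xc A),
        x.1 = ((n : ℕ∞), (⊤ : ℕ∞)) ∧
        (∀ j, (q j).1.1 = (n : ℕ∞)) ∧
        @Tendsto ℕ (Xc A) q atTop (@nhds _ (XcTop A) x) ∧
        ∀ j, F (q j) = some (p j) := by
  have hev := eventually_le_of_tendsto_fan hp
  obtain ⟨n, hn⟩ := exists_forall_fst_le_of_eventually_le hev
  let k : ℕ → ℕ := fun j => (f (p j).1).symm (p j).2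
  have hk : Tendsto k atTop atTop :=
    tendsto_atTop_mono (fun j => le_coe_symm_apply _ _) (tendsto_snd_atTop_of_eventually_le hev)
  refine ⟨n, hn,
    fun j => ⟨((n : ℕ∞), (k j : ℕ∞)),
      natCast_prod_natCast_notMem_badSet hDisj ((f _).symm _).2 (hn j)⟩,
    ⟨((n : ℕ∞), ⊤), natCast_prod_top_notMem_badSet n⟩, rfl, fun _ => rfl,
    tendsto_XcTop_iff.2 (tendsto_refinedTop_natCast_top hk n), fun j => ?_⟩
  exact (hFnat _ (k j) rfl).trans <| congrArg some (index_enum_symm_apply hDisj f hξ _ _)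

/-- The map `f : X → S_ω` (with `f⟨m,ω⟩ = 0` and `f⟨m,k⟩ = ⟨ξ k, f_{ξ k} k⟩`) is
sequence-covering: every nontrivial sequence `p` converging to `0` in `S_ω` is covered by
a lift, constant equal to `n = max` of the first coordinates of `p` in the first
coordinate, converging to `⟨n, ω⟩` in `X`. -/
theorem f_sequence_covering (A : ℕ → Set ℕ)
    (hInf : ∀ i, (A i).Infinite)
    (hDisj : Pairwise fun i j => Disjoint (A i) (A j))
    (hUnion : (⋃ i, A i) = Set.univ)
    (hlt : ∀ i j, i < j → ∀ g : (A i) ≃o (A j), ∀ n : A i, (n : ℕ) < (g n : ℕ))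
    (f : ∀ i, (A i) ≃o ℕ)
    (ξ : ℕ → ℕ) (hξ : ∀ k, k ∈ A (ξ k))
    (F : Xc A → Option (ℕ × ℕ))
    (hFtop : ∀ x : Xc A, x.1.2 = ⊤ → F x = none)
    (hFnat : ∀ (x : Xc A) (k : ℕ), x.1.2 = (k : ℕ∞) →
      F x = some (ξ k, (f (ξ k)) ⟨k, hξ k⟩))
    (p : ℕ → ℕ × ℕ)
    (hp : @Tendsto ℕ (Option (ℕ × ℕ)) (fun j => some (p j)) atTop
      (@nhds _ fanTopology none)) :
    ∃ n : ℕ, (∀ j, (p j).1 ≤ n) ∧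
      ∃ (q : ℕ → Xc A) (x : Xc A),
        x.1 = ((n : ℕ∞), (⊤ : ℕ∞)) ∧
        (∀ j, (q j).1.1 = (n : ℕ∞)) ∧
        @Tendsto ℕ (Xc A) q atTop (@nhds _ (XcTop A) x) ∧
        ∀ j, F (q j) = some (p j) :=
  f_sequence_covering_general A hDisj f ξ hξ F hFnat p hp
end

section
/- With notation from the counterexample construction, the map f : X → S_ω is not 1-sequence-covering: for every point y = ⟨n, ω⟩ ∈ f⁻¹(0) with n ∈ ω, the sequence k ↦ ⟨n+1, k⟩ in S_ω converges to 0 but every lift of it has all first coordinates > n, hence cannot converge to y; and for y = ⟨ω, ω⟩, every sequence in X converging to y is eventually in (ω+1)×{ω}, so covers no nontrivial sequence of isolated points of S_ω. -/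
/-!
A point of `f⁻¹(0)` is `(n, ω)` or `(ω, ω)`. Lifts of the column `k ↦ ⟨n+1, k⟩` of `S_ω` lie in
`{(m, k) : k ∈ A (n+1)}`, and the points of `X` there have `m ≥ n + 1` because `n × A (n+1)` was
removed; so they cannot converge to `(n, ω)`, whose neighbourhood `{n} × (ω+1)` is open. A sequence
with finite second coordinates cannot converge to `(ω, ω)` either: each column `{m} × ω` is met only
finitely often, so a function `g` beyond all heights visited in column `m` gives a neighbourhood
`((ω+1) × {ω}) ∪ L g` of `(ω, ω)` that the sequence never enters.
-/

open Filter Topology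

lemma fan_tendsto_none_of_fst_const (c : ℕ) :
    @Tendsto ℕ (Option (ℕ × ℕ)) (fun j => some (c, j)) atTop (@nhds _ fanTopology none) := by
  refine TopologicalSpace.tendsto_nhds_generateFrom_iff.2 fun s hs hnone => ?_
  rcases hs with ⟨a, rfl⟩ | ⟨g, rfl⟩
  · simp at hnone
  · filter_upwards [eventually_ge_atTop (g c)] with j hj
    exact Set.mem_insert_of_mem _ ⟨(c, j), hj, rfl⟩

lemma refinedTop_le_instTopologicalSpaceProd :
    refinedTop ≤ (inferInstance : TopologicalSpace (ℕ∞ × ℕ∞)) :=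
  fun s hs => TopologicalSpace.GenerateOpen.basic s (Or.inl hs)

lemma refinedTop_isOpen_top_union_Lhat (g : ℕ → ℕ) :
    IsOpen[refinedTop] ((Set.univ ×ˢ {⊤}) ∪ Lhat g) :=
  TopologicalSpace.GenerateOpen.basic _ (Or.inr ⟨g, rfl⟩)

lemma Xc.tendsto_val {A : ℕ → Set ℕ} {q : ℕ → Xc A} {x : Xc A}
    (hq : @Tendsto _ _ q atTop (@nhds _ (XcTop A) x)) :
    @Tendsto _ _ (fun j => (q j).1) atTop (@nhds _ refinedTop x.1) :=
  (@Continuous.tendsto _ _ (XcTop A) refinedTop _ continuous_induced_dom x).comp hq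

lemma eventually_fst_eq_of_tendsto_refinedTop {u : ℕ → ℕ∞ × ℕ∞} {n : ℕ} {b : ℕ∞}
    (hu : @Tendsto _ _ u atTop (@nhds _ refinedTop ((n : ℕ∞), b))) :
    ∀ᶠ j in atTop, (u j).1 = n :=
  (hu.mono_right (nhds_mono refinedTop_le_instTopologicalSpaceProd)).fst_nhds
    (ENat.isOpen_singleton (ENat.natCast_ne_top n) |>.mem_nhds rfl)

lemma not_tendsto_refinedTop_top_top {u : ℕ → ℕ∞ × ℕ∞} (hu_snd : ∀ j, (u j).2 ≠ ⊤) :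
    ¬ @Tendsto _ _ u atTop (@nhds _ refinedTop (⊤, ⊤)) := by
  intro hu
  have hfst : ∀ n : ℕ, ∀ᶠ j in atTop, (u j).1 ≠ n := fun n =>
    (hu.mono_right (nhds_mono refinedTop_le_instTopologicalSpaceProd)).fst_nhds.eventually_ne
      (ENat.top_ne_natCast n)
  choose J hJ using fun n => eventually_atTop.1 (hfst n)
  set g : ℕ → ℕ := fun n => (Finset.range (J n)).sup (fun j => (u j).2.toNat) + 1
  have hmem : ∀ᶠ j in atTop, u j ∈ (Set.univ ×ˢ {⊤}) ∪ Lhat g :=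
    hu (@IsOpen.mem_nhds _ refinedTop _ _ (refinedTop_isOpen_top_union_Lhat g)
      (Or.inl ⟨trivial, rfl⟩))
  obtain ⟨j, hj⟩ := hmem.exists
  rcases hj with ⟨-, htop⟩ | ⟨m, k, hjmk, hgk⟩
  · exact hu_snd j htop
  · have hj_lt : j < J m := lt_of_not_ge fun h => hJ m j h (by rw [hjmk])
    have hk_le : k ≤ (Finset.range (J m)).sup (fun j => (u j).2.toNat) := by
      simpa [hjmk] using Finset.le_sup (f := fun j => (u j).2.toNat) (Finset.mem_range.2 hj_lt)
    simp only [g] at hgk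
    omega

lemma Xc.xi_le_fst {A : ℕ → Set ℕ} {ξ : ℕ → ℕ} (hξ : ∀ k, k ∈ A (ξ k)) (x : Xc A) {m k : ℕ}
    (hx : x.1 = ((m : ℕ∞), (k : ℕ∞))) : ξ k ≤ m :=
  le_of_not_gt fun hlt => x.2 ⟨ξ k, m, k, hlt, hξ k, hx⟩

section Fibers

variable {A : ℕ → Set ℕ} {f : ∀ i, (A i) ≃o ℕ} {ξ : ℕ → ℕ} {hξ : ∀ k, k ∈ A (ξ k)}
  {F : Xc A → Option (ℕ × ℕ)}

lemma snd_eq_top_of_F_eq_none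
    (hFnat : ∀ (x : Xc A) (k : ℕ), x.1.2 = (k : ℕ∞) →
      F x = some (ξ k, (f (ξ k)) ⟨k, hξ k⟩))
    {x : Xc A} (hx : F x = none) : x.1.2 = ⊤ := by
  induction h : x.1.2 using ENat.recTopCoe with
  | top => rfl
  | coe k => simp [hFnat x k h] at hx

lemma exists_snd_eq_coe_of_F_eq_some
    (hFtop : ∀ x : Xc A, x.1.2 = ⊤ → F x = none)
    (hFnat : ∀ (x : Xc A) (k : ℕ), x.1.2 = (k : ℕ∞) →
      F x = some (ξ k, (f (ξ k)) ⟨k, hξ k⟩))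
    {x : Xc A} {c l : ℕ} (hx : F x = some (c, l)) : ∃ k : ℕ, x.1.2 = k ∧ ξ k = c := by
  induction h : x.1.2 using ENat.recTopCoe with
  | top => simp [hFtop x h] at hx
  | coe k =>
    rw [hFnat x k h, Option.some.injEq, Prod.mk.injEq] at hx
    exact ⟨k, rfl, hx.1⟩

end Fibers

theorem f_not_one_sequence_covering_general (A : ℕ → Set ℕ)
    (f : ∀ i, (A i) ≃o ℕ)
    (ξ : ℕ → ℕ) (hξ : ∀ k, k ∈ A (ξ k))
    (F : Xc A → Option (ℕ × ℕ))
    (hFtop : ∀ x : Xc A, x.1.2 = ⊤ → F x = none)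
    (hFnat : ∀ (x : Xc A) (k : ℕ), x.1.2 = (k : ℕ∞) →
      F x = some (ξ k, (f (ξ k)) ⟨k, hξ k⟩)) :
    ¬ ∃ x : Xc A, F x = none ∧
        ∀ p : ℕ → ℕ × ℕ,
          @Tendsto ℕ (Option (ℕ × ℕ)) (fun j => some (p j)) atTop
            (@nhds _ fanTopology none) →
          ∃ q : ℕ → Xc A,
            @Tendsto ℕ (Xc A) q atTop (@nhds _ (XcTop A) x) ∧
            ∀ j, F (q j) = some (p j) := by
  rintro ⟨⟨⟨a, b⟩, hx⟩, hx0, hlift⟩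
  obtain rfl : b = ⊤ := snd_eq_top_of_F_eq_none hFnat hx0
  induction a using ENat.recTopCoe with
  | top =>
    obtain ⟨q, hq, hFq⟩ := hlift _ (fan_tendsto_none_of_fst_const 0)
    refine not_tendsto_refinedTop_top_top (fun j => ?_) (Xc.tendsto_val hq)
    obtain ⟨k, hk, -⟩ := exists_snd_eq_coe_of_F_eq_some hFtop hFnat (hFq j)
    simp [hk]
  | coe n =>
    obtain ⟨q, hq, hFq⟩ := hlift _ (fan_tendsto_none_of_fst_const (n + 1))
    obtain ⟨j, hj⟩ := (eventually_fst_eq_of_tendsto_refinedTop (Xc.tendsto_val hq)).exists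
    obtain ⟨k, hk, hξk⟩ := exists_snd_eq_coe_of_F_eq_some hFtop hFnat (hFq j)
    have := Xc.xi_le_fst hξ (q j) (Prod.ext hj hk)
    omega

/-- The map `f : X → S_ω` is not 1-sequence-covering: no single point `x` of the
fiber `f⁻¹(0) = (ω+1) × {ω}` serves as the limit of lifts of all nontrivial sequences
converging to `0` in `S_ω`. -/
theorem f_not_one_sequence_covering (A : ℕ → Set ℕ)
    (hInf : ∀ i, (A i).Infinite)
    (hDisj : Pairwise fun i j => Disjoint (A i) (A j))
    (hUnion : (⋃ i, A i) = Set.univ)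
    (hlt : ∀ i j, i < j → ∀ g : (A i) ≃o (A j), ∀ n : A i, (n : ℕ) < (g n : ℕ))
    (f : ∀ i, (A i) ≃o ℕ)
    (ξ : ℕ → ℕ) (hξ : ∀ k, k ∈ A (ξ k))
    (F : Xc A → Option (ℕ × ℕ))
    (hFtop : ∀ x : Xc A, x.1.2 = ⊤ → F x = none)
    (hFnat : ∀ (x : Xc A) (k : ℕ), x.1.2 = (k : ℕ∞) →
      F x = some (ξ k, (f (ξ k)) ⟨k, hξ k⟩)) :
    ¬ ∃ x : Xc A, F x = none ∧
        ∀ p : ℕ → ℕ × ℕ,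
          @Tendsto ℕ (Option (ℕ × ℕ)) (fun j => some (p j)) atTop
            (@nhds _ fanTopology none) →
          ∃ q : ℕ → Xc A,
            @Tendsto ℕ (Xc A) q atTop (@nhds _ (XcTop A) x) ∧
            ∀ j, F (q j) = some (p j) :=
  f_not_one_sequence_covering_general A f ξ hξ F hFtop hFnat
end
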